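/- arXiv:1401.0230 — 3 statements merged into one kernel-verified Lean document; each statement's English description precedes it below -/
import Mathlib

section
/- (Virial theorem for dissipative Lagrangian systems) Let ζ ∈ ℂ and q ∈ ℂ^N with q ≠ 0 and C(ζ,β)q = 0, so that Q(t) = e^{−iζt}q (with Q̇(t) = −iζe^{−iζt}q) is an eigenmode of the Lagrangian system αQ̈ + (2θ+βR)Q̇ + ηQ = 0. If Re ζ ≠ 0, then for every t ∈ ℝ one has 𝒯(Q̇(t),Q(t)) = 𝒱(Q̇(t),Q(t)) − (Im ζ / Re ζ)² · Re⟨Q̇(t), θQ(t)⟩. If instead Re ζ = 0, then either ζ = 0 or ⟨Q̇(t), θQ(t)⟩ = 0 for every t ∈ ℝ. -/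
/-
Everything reduces to the scalar quadratic obtained by pairing the eigenvalue equation with `q`:
`ζ² a + iζ(2s + βr) − h = 0`, where `a = ⟨q,αq⟩`, `h = ⟨q,ηq⟩`, `r = ⟨q,Rq⟩` are real and
`s = ⟨q,θq⟩` is purely imaginary. Writing `ζ = x + iy`, the combination `x·Re + y·Im` of this
equation eliminates the dissipative term `βr` and gives `x (|ζ|² a − h) = 2 |ζ|² Im s`, which is
the virial identity once the common factor `|e^{−iζt}|²` of all energies is cancelled. When
`x = 0`, the imaginary part alone gives `y · Im s = 0`.
-/

open Matrix
open scoped ComplexOrder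

noncomputable section

variable {N : ℕ}

/-- A real matrix viewed as a complex matrix. -/
def cm (M : Matrix (Fin N) (Fin N) ℝ) : Matrix (Fin N) (Fin N) ℂ :=
  M.map Complex.ofReal

/-- The quadratic matrix pencil `C(ζ,β) = ζ²α + iζ(2θ + βR) − η`. -/
def pencil (α η θ R : Matrix (Fin N) (Fin N) ℝ) (β : ℝ) (ζ : ℂ) :
    Matrix (Fin N) (Fin N) ℂ :=
  ζ ^ 2 • cm α + (Complex.I * ζ) • ((2 : ℂ) • cm θ + (β : ℂ) • cm R) - cm η

/-- The eigenmode trajectory `Q(t) = e^{−iζt} q`. -/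
def trajQ (ζ : ℂ) (q : Fin N → ℂ) (t : ℝ) : Fin N → ℂ :=
  Complex.exp (-Complex.I * ζ * t) • q

/-- The eigenmode velocity `Q̇(t) = −iζ e^{−iζt} q`. -/
def trajQdot (ζ : ℂ) (q : Fin N → ℂ) (t : ℝ) : Fin N → ℂ :=
  (-Complex.I * ζ * Complex.exp (-Complex.I * ζ * t)) • q

/-- Kinetic energy `𝒯(Q̇,Q) = ½⟨Q̇, αQ̇⟩ + ½ Re⟨Q̇, θQ⟩`. -/
def kinE (α θ : Matrix (Fin N) (Fin N) ℝ) (Qd Q : Fin N → ℂ) : ℝ :=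
  (1 / 2) * (star Qd ⬝ᵥ (cm α *ᵥ Qd)).re + (1 / 2) * (star Qd ⬝ᵥ (cm θ *ᵥ Q)).re

/-- Potential energy `𝒱(Q̇,Q) = ½⟨Q, ηQ⟩ − ½ Re⟨Q̇, θQ⟩`. -/
def potE (η θ : Matrix (Fin N) (Fin N) ℝ) (Qd Q : Fin N → ℂ) : ℝ :=
  (1 / 2) * (star Q ⬝ᵥ (cm η *ᵥ Q)).re - (1 / 2) * (star Qd ⬝ᵥ (cm θ *ᵥ Q)).re

open Complex ComplexConjugate

section QuadraticForm

variable {n : Type*} [Fintype n]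

lemma Matrix.re_star_dotProduct_mulVec_self_eq_zero_of_conjTranspose_eq_neg
    {A : Matrix n n ℂ} (hA : Aᴴ = -A) (x : n → ℂ) : (star x ⬝ᵥ A *ᵥ x).re = 0 := by
  -- `I • A` is Hermitian, and the imaginary part of its form is the real part of that of `A`.
  have hIA : (I • A).IsHermitian := by
    rw [IsHermitian, conjTranspose_smul, hA, star_def, conj_I, smul_neg, neg_smul, neg_neg]
  simpa [smul_mulVec, dotProduct_smul] using hIA.im_star_dotProduct_mulVec_self x

lemma Matrix.star_smul_dotProduct_mulVec_smul (A : Matrix n n ℂ) (x : n → ℂ) (c d : ℂ) :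
    star (c • x) ⬝ᵥ A *ᵥ (d • x) = star c * d * (star x ⬝ᵥ A *ᵥ x) := by
  simp only [star_smul, mulVec_smul, smul_dotProduct, dotProduct_smul, smul_eq_mul]
  ring

end QuadraticForm

lemma cm_conjTranspose (M : Matrix (Fin N) (Fin N) ℝ) : (cm M)ᴴ = cm Mᵀ := by
  ext i j
  simp [cm, conjTranspose_apply]

lemma cm_neg (M : Matrix (Fin N) (Fin N) ℝ) : cm (-M) = -cm M := by
  ext i j
  simp [cm]

lemma star_dotProduct_pencil_mulVec (α η θ R : Matrix (Fin N) (Fin N) ℝ) (β : ℝ)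
    (ζ : ℂ) (q : Fin N → ℂ) :
    star q ⬝ᵥ pencil α η θ R β ζ *ᵥ q =
      ζ ^ 2 * (star q ⬝ᵥ cm α *ᵥ q) +
        I * ζ * (2 * (star q ⬝ᵥ cm θ *ᵥ q) + β * (star q ⬝ᵥ cm R *ᵥ q)) -
          star q ⬝ᵥ cm η *ᵥ q := by
  simp only [pencil, add_mulVec, sub_mulVec, smul_mulVec, dotProduct_add, dotProduct_sub,
    dotProduct_smul, smul_eq_mul]

section PencilRoot

variable {a s h r ζ : ℂ} {β : ℝ}

lemma pencil_root_re (ha : a.im = 0) (hs : s.re = 0) (hr : r.im = 0)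
    (hζ : ζ ^ 2 * a + I * ζ * (2 * s + β * r) - h = 0) :
    (ζ.re ^ 2 - ζ.im ^ 2) * a.re - 2 * ζ.re * s.im - β * ζ.im * r.re - h.re = 0 := by
  have := congrArg re hζ
  simp only [pow_two, sub_re, add_re, mul_re, mul_im, add_im, I_re, I_im, ofReal_re, ofReal_im,
    re_ofNat, im_ofNat, ha, hs, hr, zero_re] at this
  linear_combination this

lemma pencil_root_im (ha : a.im = 0) (hs : s.re = 0) (hh : h.im = 0) (hr : r.im = 0)
    (hζ : ζ ^ 2 * a + I * ζ * (2 * s + β * r) - h = 0) :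
    2 * ζ.re * ζ.im * a.re - 2 * ζ.im * s.im + β * ζ.re * r.re = 0 := by
  have := congrArg im hζ
  simp only [pow_two, sub_im, add_im, mul_re, mul_im, add_re, I_re, I_im, ofReal_re, ofReal_im,
    re_ofNat, im_ofNat, ha, hs, hh, hr, zero_im] at this
  linear_combination this

lemma pencil_root_virial (ha : a.im = 0) (hs : s.re = 0) (hh : h.im = 0) (hr : r.im = 0)
    (hζ : ζ ^ 2 * a + I * ζ * (2 * s + β * r) - h = 0) :
    ζ.re * (normSq ζ * a.re - h.re) = 2 * normSq ζ * s.im := by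
  rw [normSq_apply]
  linear_combination ζ.re * pencil_root_re ha hs hr hζ + ζ.im * pencil_root_im ha hs hh hr hζ

end PencilRoot

section Trajectory

variable (A : Matrix (Fin N) (Fin N) ℂ) (ζ : ℂ) (q : Fin N → ℂ) (t : ℝ)

lemma star_trajQdot_dotProduct_mulVec_trajQdot :
    star (trajQdot ζ q t) ⬝ᵥ A *ᵥ trajQdot ζ q t =
      (normSq ζ * normSq (exp (-I * ζ * t)) : ℝ) * (star q ⬝ᵥ A *ᵥ q) := by
  rw [trajQdot, star_smul_dotProduct_mulVec_smul, star_def, ← normSq_eq_conj_mul_self,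
    normSq_mul, normSq_mul, normSq_neg, normSq_I, one_mul]

lemma star_trajQ_dotProduct_mulVec_trajQ :
    star (trajQ ζ q t) ⬝ᵥ A *ᵥ trajQ ζ q t =
      (normSq (exp (-I * ζ * t)) : ℝ) * (star q ⬝ᵥ A *ᵥ q) := by
  rw [trajQ, star_smul_dotProduct_mulVec_smul, star_def, ← normSq_eq_conj_mul_self]

lemma star_trajQdot_dotProduct_mulVec_trajQ :
    star (trajQdot ζ q t) ⬝ᵥ A *ᵥ trajQ ζ q t =
      I * conj ζ * (normSq (exp (-I * ζ * t)) : ℝ) * (star q ⬝ᵥ A *ᵥ q) := by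
  rw [trajQdot, trajQ, star_smul_dotProduct_mulVec_smul, star_def, normSq_eq_conj_mul_self]
  simp only [map_mul, map_neg, conj_I]
  ring

lemma re_star_trajQdot_dotProduct_mulVec_trajQ (hA : (star q ⬝ᵥ A *ᵥ q).re = 0) :
    (star (trajQdot ζ q t) ⬝ᵥ A *ᵥ trajQ ζ q t).re =
      -(ζ.re * normSq (exp (-I * ζ * t)) * (star q ⬝ᵥ A *ᵥ q).im) := by
  simp only [star_trajQdot_dotProduct_mulVec_trajQ, mul_re, mul_im, I_re, I_im, conj_re, conj_im,
    ofReal_re, ofReal_im, hA]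
  ring

end Trajectory

theorem virial_theorem_dissipative_general
    {N : ℕ}
    (α η θ R : Matrix (Fin N) (Fin N) ℝ)
    (hα : (cm α).PosDef) (hη : (cm η).PosSemidef)
    (hθ : θᵀ = -θ) (hR : (cm R).PosSemidef)
    (β : ℝ)
    (ζ : ℂ) (q : Fin N → ℂ)
    (hmode : pencil α η θ R β ζ *ᵥ q = 0) :
    (ζ.re ≠ 0 →
      ∀ t : ℝ,
        kinE α θ (trajQdot ζ q t) (trajQ ζ q t) =
          potE η θ (trajQdot ζ q t) (trajQ ζ q t) -
            (ζ.im / ζ.re) ^ 2 * (star (trajQdot ζ q t) ⬝ᵥ (cm θ *ᵥ trajQ ζ q t)).re) ∧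
    (ζ.re = 0 →
      ζ = 0 ∨ ∀ t : ℝ, star (trajQdot ζ q t) ⬝ᵥ (cm θ *ᵥ trajQ ζ q t) = 0) := by
  have ha : (star q ⬝ᵥ cm α *ᵥ q).im = 0 := hα.isHermitian.im_star_dotProduct_mulVec_self q
  have hh : (star q ⬝ᵥ cm η *ᵥ q).im = 0 := hη.isHermitian.im_star_dotProduct_mulVec_self q
  have hr : (star q ⬝ᵥ cm R *ᵥ q).im = 0 := hR.isHermitian.im_star_dotProduct_mulVec_self q
  have hs := re_star_dotProduct_mulVec_self_eq_zero_of_conjTranspose_eq_neg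
    (by rw [cm_conjTranspose, hθ, cm_neg]) q
  have hroot := congrArg (star q ⬝ᵥ ·) hmode
  rw [star_dotProduct_pencil_mulVec, dotProduct_zero] at hroot
  constructor
  · intro hx t
    have hvirial := pencil_root_virial ha hs hh hr hroot
    rw [kinE, potE, star_trajQdot_dotProduct_mulVec_trajQdot, star_trajQ_dotProduct_mulVec_trajQ,
      re_ofReal_mul, re_ofReal_mul, re_star_trajQdot_dotProduct_mulVec_trajQ _ _ _ _ hs]
    rw [normSq_apply ζ] at hvirial ⊢
    field_simp
    linear_combination hvirial
  · intro hx
    have hyσ := pencil_root_im ha hs hh hr hroot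
    rw [hx] at hyσ
    rcases mul_eq_zero.mp (show ζ.im * (star q ⬝ᵥ cm θ *ᵥ q).im = 0 by linarith) with hy | hσ
    · exact Or.inl (Complex.ext hx hy)
    · refine Or.inr fun t => ?_
      have hσ' : star q ⬝ᵥ cm θ *ᵥ q = 0 := Complex.ext hs hσ
      rw [star_trajQdot_dotProduct_mulVec_trajQ, hσ', mul_zero]

/-- **Virial theorem for dissipative Lagrangian systems.**
If `Q(t) = e^{−iζt} q` is an eigenmode of `αQ̈ + (2θ+βR)Q̇ + ηQ = 0` then:
if `Re ζ ≠ 0`, for all `t`, `𝒯 = 𝒱 − (Im ζ / Re ζ)² Re⟨Q̇, θQ⟩`; and if `Re ζ = 0`,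
either `ζ = 0` or `⟨Q̇(t), θQ(t)⟩ = 0` for all `t`. -/
theorem virial_theorem_dissipative
    {N : ℕ} (hN : 1 ≤ N)
    (α η θ R : Matrix (Fin N) (Fin N) ℝ)
    (hα : (cm α).PosDef) (hη : (cm η).PosSemidef)
    (hθ : θᵀ = -θ) (hR : (cm R).PosSemidef)
    (β : ℝ) (hβ : 0 ≤ β)
    (ζ : ℂ) (q : Fin N → ℂ) (hq : q ≠ 0)
    (hmode : pencil α η θ R β ζ *ᵥ q = 0) :
    (ζ.re ≠ 0 →
      ∀ t : ℝ,
        kinE α θ (trajQdot ζ q t) (trajQ ζ q t) =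
          potE η θ (trajQdot ζ q t) (trajQ ζ q t) -
            (ζ.im / ζ.re) ^ 2 * (star (trajQdot ζ q t) ⬝ᵥ (cm θ *ᵥ trajQ ζ q t)).re) ∧
    (ζ.re = 0 →
      ζ = 0 ∨ ∀ t : ℝ, star (trajQdot ζ q t) ⬝ᵥ (cm θ *ᵥ trajQ ζ q t) = 0) :=
  virial_theorem_dissipative_general α η θ R hα hη hθ hR β ζ q hmode
end
end

section
/- (Equipartition of energy for oscillatory eigenmodes) Assume θ = 0. Let ζ ∈ ℂ and q ∈ ℂ^N with q ≠ 0, C(ζ,β)q = 0, and Re ζ ≠ 0, so that Q(t) = e^{−iζt}q is an oscillatory eigenmode of αQ̈ + βRQ̇ + ηQ = 0. Then for every t ∈ ℝ the kinetic energy equals the potential energy: ½⟨Q̇(t), αQ̇(t)⟩ = ½⟨Q(t), ηQ(t)⟩, i.e. 𝒯(Q̇(t),Q(t)) = 𝒱(Q̇(t),Q(t)). -/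
open Matrix
open scoped ComplexOrder

noncomputable section

variable {N : ℕ}

/-!
Pairing `C(ζ,β) q = 0` with `q` gives the scalar equation `ζ² a + i ζ β r − e = 0`, where
`a, r, e` are the (real) Hermitian forms of `α, R, η` at `q`. Its imaginary part is
`Re ζ · (2 Im ζ · a + β r) = 0`; since `Re ζ ≠ 0` this eliminates `β r` from the real part, which
becomes `|ζ|² a = e`. Both energies of `Q(t) = e^{−iζt} q` are `|e^{−iζt}|²` times the two sides.
-/

open ComplexConjugate

namespace Complex

theorem conj_mul_self_mul_eq_of_quadratic_eq_zero {ζ a r e : ℂ} (hζ : ζ.re ≠ 0)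
    (ha : a.im = 0) (hr : r.im = 0) (he : e.im = 0) (h : ζ ^ 2 * a + I * ζ * r - e = 0) :
    conj ζ * ζ * a = e := by
  have hre := congrArg re h
  have him := congrArg im h
  simp only [sub_re, add_re, mul_re, sub_im, add_im, mul_im, pow_two, I_re, I_im, ha, hr, he,
    zero_re, zero_im] at hre him
  have hr' : r.re = -2 * ζ.im * a.re := by
    have : ζ.re * (2 * ζ.im * a.re + r.re) = 0 := by linear_combination him
    linarith [(mul_eq_zero.mp this).resolve_left hζ]
  apply Complex.ext
  · simp only [mul_re, mul_im, conj_re, conj_im, ha]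
    linear_combination hre + ζ.im * hr'
  · simp only [mul_im, mul_re, conj_re, conj_im, ha, he]
    ring

end Complex

namespace Matrix

variable {n : Type*} [Fintype n]

theorem star_smul_dotProduct_mulVec_smul_s1 (A : Matrix n n ℂ) (c : ℂ) (x : n → ℂ) :
    star (c • x) ⬝ᵥ (A *ᵥ (c • x)) = conj c * c * (star x ⬝ᵥ (A *ᵥ x)) := by
  rw [star_smul, mulVec_smul, smul_dotProduct, dotProduct_smul, smul_eq_mul, smul_eq_mul,
    Complex.star_def, mul_assoc]

theorem conj_mul_self_mul_dotProduct_mulVec_eq {A B C : Matrix n n ℂ} (hA : A.IsHermitian)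
    (hB : B.IsHermitian) (hC : C.IsHermitian) {ζ : ℂ} (hζ : ζ.re ≠ 0) {x : n → ℂ}
    (hx : (ζ ^ 2 • A + (Complex.I * ζ) • B - C) *ᵥ x = 0) :
    conj ζ * ζ * (star x ⬝ᵥ (A *ᵥ x)) = star x ⬝ᵥ (C *ᵥ x) := by
  refine Complex.conj_mul_self_mul_eq_of_quadratic_eq_zero hζ
    (hA.im_star_dotProduct_mulVec_self x) (hB.im_star_dotProduct_mulVec_self x)
    (hC.im_star_dotProduct_mulVec_self x) ?_
  simpa only [sub_mulVec, add_mulVec, smul_mulVec, dotProduct_sub, dotProduct_add,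
    dotProduct_smul, smul_eq_mul, dotProduct_zero, mul_assoc] using congrArg (star x ⬝ᵥ ·) hx

end Matrix

theorem pencil_zero_theta (α η R : Matrix (Fin N) (Fin N) ℝ) (β : ℝ) (ζ : ℂ) :
    pencil α η 0 R β ζ = ζ ^ 2 • cm α + (Complex.I * ζ) • ((β : ℂ) • cm R) - cm η := by
  simp [pencil, cm]

theorem energy_equipartition_general
    {N : ℕ}
    (α η R : Matrix (Fin N) (Fin N) ℝ)
    (hα : (cm α).PosDef) (hη : (cm η).PosSemidef) (hR : (cm R).PosSemidef)
    (β : ℝ)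
    (ζ : ℂ) (hζ : ζ.re ≠ 0) (q : Fin N → ℂ)
    (hmode : pencil α η 0 R β ζ *ᵥ q = 0) :
    ∀ t : ℝ,
      (1 / 2 : ℂ) * (star (trajQdot ζ q t) ⬝ᵥ (cm α *ᵥ trajQdot ζ q t)) =
        (1 / 2 : ℂ) * (star (trajQ ζ q t) ⬝ᵥ (cm η *ᵥ trajQ ζ q t)) := by
  intro t
  have hβR : ((β : ℂ) • cm R).IsHermitian := hR.isHermitian.smul (Complex.conj_ofReal β)
  have hbalance := conj_mul_self_mul_dotProduct_mulVec_eq hα.isHermitian hβR hη.isHermitian hζ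
    (by rwa [← pencil_zero_theta])
  simp only [trajQdot, trajQ, star_smul_dotProduct_mulVec_smul_s1, map_mul, map_neg,
    Complex.conj_I, ← hbalance]
  set E := Complex.exp (-Complex.I * ζ * t)
  linear_combination (-(1 / 2) * conj ζ * ζ * conj E * E * (star q ⬝ᵥ (cm α *ᵥ q))) * Complex.I_sq

/-- **Equipartition of energy for oscillatory eigenmodes** (case `θ = 0`).
If `Q(t) = e^{−iζt} q` is an eigenmode of `αQ̈ + βRQ̇ + ηQ = 0` with `Re ζ ≠ 0`, then
for every `t`, the kinetic energy `½⟨Q̇, αQ̇⟩` equals the potential energy `½⟨Q, ηQ⟩`. -/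
theorem energy_equipartition
    {N : ℕ} (hN : 1 ≤ N)
    (α η R : Matrix (Fin N) (Fin N) ℝ)
    (hα : (cm α).PosDef) (hη : (cm η).PosSemidef) (hR : (cm R).PosSemidef)
    (β : ℝ) (hβ : 0 ≤ β)
    (ζ : ℂ) (hζ : ζ.re ≠ 0) (q : Fin N → ℂ) (hq : q ≠ 0)
    (hmode : pencil α η 0 R β ζ *ᵥ q = 0) :
    ∀ t : ℝ,
      (1 / 2 : ℂ) * (star (trajQdot ζ q t) ⬝ᵥ (cm α *ᵥ trajQdot ζ q t)) =
        (1 / 2 : ℂ) * (star (trajQ ζ q t) ⬝ᵥ (cm η *ᵥ trajQ ζ q t)) :=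
  energy_equipartition_general α η R hα hη hR β ζ hζ q hmode
end
end

section
/- (Factorization of the characteristic matrix) For every ζ ∈ ℂ with ζ ≠ 0, the 2N×2N matrix ζ·1 − A(β) admits the block factorization ζ·1 − A(β) = [[K_p, ζ⁻¹iΦᵀ],[0, 1]] · [[ζ⁻¹·1, 0],[0, ζ·1]] · [[C(ζ,β), 0],[0, 1]] · [[K_p, 0],[−ζ⁻¹iΦ, 1]], where each factor is a 2N×2N matrix written in N×N blocks and 1 denotes the N×N identity matrix. -/
/-!
Both `K_p α K_p = 1` and `Φᵀ Φ = K_p η K_p` follow from `√α`, `√η` being the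
continuous-functional-calculus square roots, which are symmetric because `α`, `η` are real.
Hence `K_p C(ζ,β) K_p + Φᵀ Φ = ζ² + iζ(2 K_p θ K_p + β R̃)`. Multiplying out the four factors
yields `[[ζ⁻¹(K_p C K_p + ΦᵀΦ), iΦᵀ], [−iΦ, ζ]]`, and this first block is `ζ − Ω_p + iβR̃`.
-/

open Matrix
open scoped ComplexOrder

noncomputable section

variable {N : ℕ}

/-- `K_p = (√α)⁻¹`. -/
def Kp {α : Matrix (Fin N) (Fin N) ℝ} (hα : (cm α).PosDef) : Matrix (Fin N) (Fin N) ℂ :=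
  ((hα.posSemidef.1.eigenvectorUnitary : Matrix (Fin N) (Fin N) ℂ) *
    diagonal ((↑) ∘ (√·) ∘ hα.posSemidef.1.eigenvalues) *
    (star hα.posSemidef.1.eigenvectorUnitary : Matrix (Fin N) (Fin N) ℂ))⁻¹

/-- `Φ = √η · K_p`. -/
def Phi {α η : Matrix (Fin N) (Fin N) ℝ} (hα : (cm α).PosDef) (hη : (cm η).PosSemidef) :
    Matrix (Fin N) (Fin N) ℂ :=
  ((hη.1.eigenvectorUnitary : Matrix (Fin N) (Fin N) ℂ) *
    diagonal ((↑) ∘ (√·) ∘ hη.1.eigenvalues) *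
    (star hη.1.eigenvectorUnitary : Matrix (Fin N) (Fin N) ℂ)) * Kp hα

/-- `R̃ = K_p R K_p`. -/
def Rt (R : Matrix (Fin N) (Fin N) ℝ) {α : Matrix (Fin N) (Fin N) ℝ} (hα : (cm α).PosDef) :
    Matrix (Fin N) (Fin N) ℂ :=
  Kp hα * cm R * Kp hα

/-- `Ω_p = −2i K_p θ K_p`. -/
def Omp (θ : Matrix (Fin N) (Fin N) ℝ) {α : Matrix (Fin N) (Fin N) ℝ} (hα : (cm α).PosDef) :
    Matrix (Fin N) (Fin N) ℂ :=
  ((-2 : ℂ) * Complex.I) • (Kp hα * cm θ * Kp hα)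

/-- `Ω = [[Ω_p, −iΦᵀ],[iΦ, 0]]`. -/
def Om (θ : Matrix (Fin N) (Fin N) ℝ) {α η : Matrix (Fin N) (Fin N) ℝ}
    (hα : (cm α).PosDef) (hη : (cm η).PosSemidef) :
    Matrix (Fin N ⊕ Fin N) (Fin N ⊕ Fin N) ℂ :=
  fromBlocks (Omp θ hα) ((-Complex.I) • (Phi hα hη)ᵀ) (Complex.I • Phi hα hη) 0

/-- `B = [[R̃, 0],[0, 0]]`. -/
def Bm (R : Matrix (Fin N) (Fin N) ℝ) {α : Matrix (Fin N) (Fin N) ℝ} (hα : (cm α).PosDef) :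
    Matrix (Fin N ⊕ Fin N) (Fin N ⊕ Fin N) ℂ :=
  fromBlocks (Rt R hα) 0 0 0

/-- The system operator `A(β) = Ω − iβB`. -/
def Asys (θ R : Matrix (Fin N) (Fin N) ℝ) {α η : Matrix (Fin N) (Fin N) ℝ}
    (hα : (cm α).PosDef) (hη : (cm η).PosSemidef) (β : ℝ) :
    Matrix (Fin N ⊕ Fin N) (Fin N ⊕ Fin N) ℂ :=
  Om θ hα hη - (Complex.I * (β : ℂ)) • Bm R hα

/-- The ℓ²→ℓ² operator norm of a complex matrix. -/
def opN {n : Type*} [Fintype n] [DecidableEq n] (M : Matrix n n ℂ) : ℝ :=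
  ‖Matrix.toEuclideanCLM (𝕜 := ℂ) M‖

/-- `ω_max = ‖Ω‖`. -/
def omegaMax (θ : Matrix (Fin N) (Fin N) ℝ) {α η : Matrix (Fin N) (Fin N) ℝ}
    (hα : (cm α).PosDef) (hη : (cm η).PosSemidef) : ℝ :=
  opN (Om θ hα hη)

/-- `b_min`, the smallest nonzero eigenvalue of `B`. -/
def bMin (R : Matrix (Fin N) (Fin N) ℝ) {α : Matrix (Fin N) (Fin N) ℝ} (hα : (cm α).PosDef) : ℝ :=
  sInf {r : ℝ | r ≠ 0 ∧ (r : ℂ) ∈ spectrum ℂ (Bm R hα)}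

section SpectralSqrt

open scoped MatrixOrder

variable {n 𝕜 : Type*} [RCLike 𝕜] [Fintype n] [DecidableEq n]

lemma Matrix.PosSemidef.eigenvectorUnitary_mul_diagonal_sqrt_eq_cfcSqrt {A : Matrix n n 𝕜}
    (hA : A.PosSemidef) :
    (hA.1.eigenvectorUnitary : Matrix n n 𝕜) * diagonal ((↑) ∘ (√·) ∘ hA.1.eigenvalues) *
      (star hA.1.eigenvectorUnitary : Matrix n n 𝕜) = CFC.sqrt A := by
  rw [CFC.sqrt_eq_real_sqrt A hA.nonneg, cfcₙ_eq_cfc, hA.1.cfc_eq]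
  rfl

lemma Matrix.PosSemidef.transpose_cfcSqrt {A : Matrix n n 𝕜} (hA : A.PosSemidef)
    (hAt : Aᵀ = A) : (CFC.sqrt A)ᵀ = CFC.sqrt A := by
  rw [eq_comm, CFC.sqrt_eq_iff A _ hA.nonneg (CFC.sqrt_nonneg A).posSemidef.transpose.nonneg,
    ← transpose_mul, CFC.sqrt_mul_sqrt_self A hA.nonneg, hAt]

lemma Matrix.PosDef.isUnit_det_cfcSqrt {A : Matrix n n 𝕜} (hA : A.PosDef) :
    IsUnit (CFC.sqrt A).det :=
  (isUnit_iff_isUnit_det _).1 (IsStrictlyPositive.isUnit_cfcSqrt A hA.isStrictlyPositive)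

end SpectralSqrt

section BlockFactorization

variable {m n 𝕜 : Type*} [Field 𝕜] [Fintype m] [Fintype n] [DecidableEq m] [DecidableEq n]

lemma fromBlocks_upper_mul_diag_mul_diag_mul_lower (K C : Matrix m m 𝕜) (U : Matrix m n 𝕜) (L : Matrix n m 𝕜)
    {ζ : 𝕜} (hζ : ζ ≠ 0) :
    fromBlocks K (ζ⁻¹ • U) 0 1 * fromBlocks (ζ⁻¹ • 1) 0 0 (ζ • 1) * fromBlocks C 0 0 1 *
        fromBlocks K 0 (ζ⁻¹ • L) 1 =
      fromBlocks (ζ⁻¹ • (K * C * K + U * L)) U L (ζ • 1) := by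
  simp only [fromBlocks_multiply, Matrix.mul_smul, Matrix.smul_mul, Matrix.mul_one,
    Matrix.one_mul, Matrix.mul_zero, Matrix.zero_mul, smul_zero, zero_add, add_zero, smul_smul,
    smul_add, inv_mul_cancel₀ hζ, mul_inv_cancel₀ hζ, one_smul]

end BlockFactorization

section SqrtInverse

open scoped MatrixOrder

lemma cm_transpose_of_isHermitian {N : ℕ} {M : Matrix (Fin N) (Fin N) ℝ}
    (hM : (cm M).IsHermitian) : (cm M)ᵀ = cm M := by
  conv_rhs => rw [← hM]
  ext i j
  simp [cm]

variable {N : ℕ} {α : Matrix (Fin N) (Fin N) ℝ} (hα : (cm α).PosDef)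

lemma Kp_eq_inv_cfcSqrt : Kp hα = (CFC.sqrt (cm α))⁻¹ :=
  congrArg (·⁻¹) hα.posSemidef.eigenvectorUnitary_mul_diagonal_sqrt_eq_cfcSqrt

lemma Kp_transpose : (Kp hα)ᵀ = Kp hα := by
  rw [Kp_eq_inv_cfcSqrt, transpose_nonsing_inv,
    hα.posSemidef.transpose_cfcSqrt (cm_transpose_of_isHermitian hα.isHermitian)]

lemma Kp_mul_cm_mul_Kp : Kp hα * cm α * Kp hα = 1 := by
  conv_lhs => rw [← CFC.sqrt_mul_sqrt_self (cm α) hα.posSemidef.nonneg]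
  rw [Kp_eq_inv_cfcSqrt, ← Matrix.mul_assoc, nonsing_inv_mul _ hα.isUnit_det_cfcSqrt,
    Matrix.one_mul, mul_nonsing_inv _ hα.isUnit_det_cfcSqrt]

lemma Phi_transpose_mul_Phi {η : Matrix (Fin N) (Fin N) ℝ} (hη : (cm η).PosSemidef) :
    (Phi hα hη)ᵀ * Phi hα hη = Kp hα * cm η * Kp hα := by
  have hPhi : Phi hα hη = CFC.sqrt (cm η) * Kp hα :=
    congrArg (· * Kp hα) hη.eigenvectorUnitary_mul_diagonal_sqrt_eq_cfcSqrt
  rw [hPhi, transpose_mul, Kp_transpose,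
    hη.transpose_cfcSqrt (cm_transpose_of_isHermitian hη.isHermitian), Matrix.mul_assoc,
    ← Matrix.mul_assoc (CFC.sqrt _), CFC.sqrt_mul_sqrt_self (cm η) hη.nonneg, Matrix.mul_assoc]

end SqrtInverse

section Characteristic

variable {N : ℕ} {α η : Matrix (Fin N) (Fin N) ℝ} (θ R : Matrix (Fin N) (Fin N) ℝ)
  (hα : (cm α).PosDef) (hη : (cm η).PosSemidef) (β : ℝ) (ζ : ℂ)

lemma Kp_mul_pencil_mul_Kp :
    Kp hα * pencil α η θ R β ζ * Kp hα =
      ζ ^ 2 • 1 + (Complex.I * ζ) • ((2 : ℂ) • (Kp hα * cm θ * Kp hα) + (β : ℂ) • Rt R hα) -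
        Kp hα * cm η * Kp hα := by
  simp only [pencil, Rt, Matrix.mul_sub, Matrix.sub_mul, Matrix.mul_add, Matrix.add_mul,
    Matrix.mul_smul, Matrix.smul_mul, Kp_mul_cm_mul_Kp]

lemma smul_one_sub_Asys :
    ζ • (1 : Matrix (Fin N ⊕ Fin N) (Fin N ⊕ Fin N) ℂ) - Asys θ R hα hη β =
      fromBlocks (ζ • 1 - Omp θ hα + (Complex.I * β) • Rt R hα) (Complex.I • (Phi hα hη)ᵀ)
        (-Complex.I • Phi hα hη) (ζ • 1) := by
  simp only [Asys, Om, Bm, ← fromBlocks_one, fromBlocks_smul, sub_eq_add_neg, fromBlocks_neg,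
    fromBlocks_add, smul_zero, neg_zero, add_zero, zero_add, neg_add, neg_neg, neg_smul, add_assoc]

end Characteristic

theorem characteristic_matrix_factorization_general
    {N : ℕ}
    (α η θ R : Matrix (Fin N) (Fin N) ℝ)
    (hα : (cm α).PosDef) (hη : (cm η).PosSemidef)
    (β : ℝ)
    (ζ : ℂ) (hζ : ζ ≠ 0) :
    ζ • (1 : Matrix (Fin N ⊕ Fin N) (Fin N ⊕ Fin N) ℂ) - Asys θ R hα hη β =
      fromBlocks (Kp hα) ((ζ⁻¹ * Complex.I) • (Phi hα hη)ᵀ) 0 1 *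
        fromBlocks (ζ⁻¹ • 1) 0 0 (ζ • 1) *
        fromBlocks (pencil α η θ R β ζ) 0 0 1 *
        fromBlocks (Kp hα) 0 (-(ζ⁻¹ * Complex.I) • Phi hα hη) 1 := by
  rw [← mul_neg, mul_smul, mul_smul, fromBlocks_upper_mul_diag_mul_diag_mul_lower _ _ _ _ hζ,
    smul_one_sub_Asys, Kp_mul_pencil_mul_Kp, smul_mul_smul_comm, Phi_transpose_mul_Phi, Omp]
  congr 1
  match_scalars <;> grind [Complex.I_sq]

/-- **Factorization of the characteristic matrix.** For `ζ ≠ 0`,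
`ζ·1 − A(β) = [[K_p, ζ⁻¹iΦᵀ],[0,1]] · [[ζ⁻¹·1,0],[0,ζ·1]] · [[C(ζ,β),0],[0,1]] · [[K_p,0],[−ζ⁻¹iΦ,1]]`. -/
theorem characteristic_matrix_factorization
    {N : ℕ} (hN : 1 ≤ N)
    (α η θ R : Matrix (Fin N) (Fin N) ℝ)
    (hα : (cm α).PosDef) (hη : (cm η).PosSemidef)
    (hθ : θᵀ = -θ) (hR : (cm R).PosSemidef)
    (β : ℝ) (hβ : 0 ≤ β)
    (ζ : ℂ) (hζ : ζ ≠ 0) :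
    ζ • (1 : Matrix (Fin N ⊕ Fin N) (Fin N ⊕ Fin N) ℂ) - Asys θ R hα hη β =
      fromBlocks (Kp hα) ((ζ⁻¹ * Complex.I) • (Phi hα hη)ᵀ) 0 1 *
        fromBlocks (ζ⁻¹ • 1) 0 0 (ζ • 1) *
        fromBlocks (pencil α η θ R β ζ) 0 0 1 *
        fromBlocks (Kp hα) 0 (-(ζ⁻¹ * Complex.I) • Phi hα hη) 1 :=
  characteristic_matrix_factorization_general α η θ R hα hη β ζ hζ
end
end
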